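/- arXiv:1907.12348 — 3 statements merged into one kernel-verified Lean document; each statement's English description precedes it below -/
import Mathlib

section
/- Let Q be a symmetric invertible real (2n+1)×(2n+1) matrix with Q² = I, and let g be a matrix satisfying gᵀ Q g = Q and det(g) = 1. Then adj(I − g)ᵀ Q = Q · adj(I − g) · g. -/
/-!
Write `g⁻¹` for the inverse of `g`. Since `Q` is an involution, `gᵀ Q g = Q` gives
`1 - gᵀ = Q (1 - g⁻¹) Q`, and conjugating by an involution commutes with taking adjugates, so
`adj(1 - g)ᵀ Q = Q adj(1 - g⁻¹)`. Finally `1 - g⁻¹ = g⁻¹ (g - 1)` with `adj g⁻¹ = g` when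
`det g = 1`, and `adj(g - 1) = adj(1 - g)` in odd dimension.
-/

open Matrix

namespace Matrix

section

variable {ι R : Type*} [Fintype ι] [DecidableEq ι] [CommRing R]

theorem det_mul_self_eq_one_of_mul_self_eq_one {Q : Matrix ι ι R} (hQ : Q * Q = 1) :
    Q.det * Q.det = 1 := by
  rw [← det_mul, hQ, det_one]

theorem adjugate_eq_det_smul_of_mul_self_eq_one {Q : Matrix ι ι R} (hQ : Q * Q = 1) :
    adjugate Q = Q.det • Q := by
  calc adjugate Q = Q * Q * adjugate Q := by rw [hQ, one_mul]
    _ = Q.det • Q := by rw [mul_assoc, mul_adjugate, mul_smul_comm, mul_one]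

theorem adjugate_conj_of_mul_self_eq_one {Q : Matrix ι ι R} (hQ : Q * Q = 1) (M : Matrix ι ι R) :
    adjugate (Q * M * Q) = Q * adjugate M * Q := by
  rw [adjugate_mul_distrib, adjugate_mul_distrib, adjugate_eq_det_smul_of_mul_self_eq_one hQ]
  simp only [Matrix.smul_mul, Matrix.mul_smul, smul_smul,
    det_mul_self_eq_one_of_mul_self_eq_one hQ, one_smul, mul_assoc]

theorem adjugate_neg_of_odd_card (hι : Odd (Fintype.card ι)) (A : Matrix ι ι R) :
    adjugate (-A) = adjugate A := by
  obtain ⟨k, hk⟩ := hι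
  rw [← neg_one_smul R A, adjugate_smul, hk, Nat.add_sub_cancel, Even.neg_one_pow ⟨k, two_mul k⟩,
    one_smul]

theorem adjugate_inv_of_det_eq_one {g : Matrix ι ι R} (hg : g.det = 1) : adjugate g⁻¹ = g := by
  have hinv : g⁻¹.det = 1 := by rw [det_nonsing_inv, hg, Ring.inverse_one]
  calc adjugate g⁻¹ = g⁻¹⁻¹ := by rw [inv_def g⁻¹, hinv, Ring.inverse_one, one_smul]
    _ = g := nonsing_inv_nonsing_inv g (by simp [hg])

theorem transpose_eq_conj_inv {Q g : Matrix ι ι R} (hQ : Q * Q = 1) (hg : gᵀ * Q * g = Q)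
    (hdet : IsUnit g.det) : gᵀ = Q * g⁻¹ * Q := by
  have hgQ : gᵀ * Q = Q * g⁻¹ :=
    calc gᵀ * Q = gᵀ * Q * g * g⁻¹ := by rw [mul_assoc _ g, mul_nonsing_inv g hdet, mul_one]
      _ = Q * g⁻¹ := by rw [hg]
  rw [← hgQ, mul_assoc, hQ, mul_one]

theorem adjugate_one_sub_transpose_mul {Q g : Matrix ι ι R} (hQ : Q * Q = 1)
    (hg : gᵀ * Q * g = Q) (hdet : IsUnit g.det) :
    (adjugate (1 - g))ᵀ * Q = Q * adjugate (1 - g⁻¹) := by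
  have hconj : 1 - gᵀ = Q * (1 - g⁻¹) * Q := by
    rw [transpose_eq_conj_inv hQ hg hdet, mul_sub, sub_mul, mul_one, hQ]
  rw [adjugate_transpose, transpose_sub, transpose_one, hconj,
    adjugate_conj_of_mul_self_eq_one hQ, mul_assoc, hQ, mul_one]

theorem adjugate_one_sub_inv (hι : Odd (Fintype.card ι)) {g : Matrix ι ι R} (hg : g.det = 1) :
    adjugate (1 - g⁻¹) = adjugate (1 - g) * g := by
  have hfactor : 1 - g⁻¹ = g⁻¹ * -(1 - g) := by
    rw [neg_sub, mul_sub, nonsing_inv_mul g (by simp [hg]), mul_one]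
  rw [hfactor, adjugate_mul_distrib, adjugate_neg_of_odd_card hι, adjugate_inv_of_det_eq_one hg]

end

end Matrix

theorem adjugate_transpose_Q_relation_general (n : ℕ)
    (Q g : Matrix (Fin (2 * n + 1)) (Fin (2 * n + 1)) ℝ)
    (hQsq : Q * Q = 1)
    (hg : gᵀ * Q * g = Q) (hdet : g.det = 1) :
    (Matrix.adjugate (1 - g))ᵀ * Q = Q * Matrix.adjugate (1 - g) * g := by
  have hodd : Odd (Fintype.card (Fin (2 * n + 1))) := by simp
  rw [adjugate_one_sub_transpose_mul hQsq hg (by simp [hdet]), adjugate_one_sub_inv hodd hdet,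
    mul_assoc]

theorem adjugate_transpose_Q_relation (n : ℕ)
    (Q g : Matrix (Fin (2 * n + 1)) (Fin (2 * n + 1)) ℝ)
    (hQsymm : Qᵀ = Q) (hQinv : IsUnit Q.det) (hQsq : Q * Q = 1)
    (hg : gᵀ * Q * g = Q) (hdet : g.det = 1) :
    (Matrix.adjugate (1 - g))ᵀ * Q = Q * Matrix.adjugate (1 - g) * g :=
  adjugate_transpose_Q_relation_general n Q g hQsq hg hdet
end

section
/- Let Q be a symmetric real matrix with Q² = I, let g be a (2n+1)×(2n+1) real matrix with gᵀ Q g = Q, det(g) = 1, such that the 1-eigenspace of g is one-dimensional and spanned by a vector v with ⟨v, v⟩_Q = vᵀ Q v = 1, and suppose I − g has rank 2n. Then for every vector u, one has ⟨adj(I − g) u, u⟩_Q / Tr(adj(I − g)) = ⟨u, v⟩_Q², where ⟨x, y⟩_Q := xᵀ Q y. -/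
open Matrix

lemma det_ne_zero_of_rows_span {N : ℕ} (M : Matrix (Fin N) (Fin N) ℝ)
    (h : Submodule.span ℝ (Set.range M) = ⊤) : M.det ≠ 0 := by
  intro hdet
  have hdetT : Mᵀ.det = 0 := by rw [det_transpose]; exact hdet
  obtain ⟨x, hx, hMx⟩ := (Matrix.exists_mulVec_eq_zero_iff).2 hdetT
  have hr : M.rank = N := by
    rw [Matrix.rank_eq_finrank_span_row, show Set.range M.row = Set.range M from rfl, h, finrank_top]
    simp
  have hker : Mᵀ.mulVecLin x = 0 := hMx
  have hxmem : x ∈ LinearMap.ker Mᵀ.mulVecLin := hker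
  have hkerne : LinearMap.ker Mᵀ.mulVecLin ≠ ⊥ := by
    intro hb
    rw [hb, Submodule.mem_bot] at hxmem
    exact hx hxmem
  have h1 : 0 < Module.finrank ℝ (LinearMap.ker Mᵀ.mulVecLin) := by
    rw [Nat.pos_iff_ne_zero]
    intro h0
    exact hkerne (Submodule.finrank_eq_zero.mp h0)
  have h2 := LinearMap.finrank_range_add_finrank_ker Mᵀ.mulVecLin
  have h3 : Mᵀ.rank < N := by
    have : Module.finrank ℝ (Fin N → ℝ) = N := by simp
    unfold Matrix.rank
    omega
  rw [Matrix.rank_transpose, hr] at h3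
  omega

lemma adjugate_ne_zero_of_rank {N : ℕ} (A : Matrix (Fin (N+1)) (Fin (N+1)) ℝ)
    (h : A.rank = N) : adjugate A ≠ 0 := by
  classical
  set W := Submodule.span ℝ (Set.range A) with hW
  have hfr : Module.finrank ℝ W = N := by
    rw [hW, show Set.range A = Set.range A.row from rfl, ← Matrix.rank_eq_finrank_span_row, h]
  -- rows are linearly dependent
  have hnli : ¬ LinearIndependent ℝ A := by
    intro hli
    have := finrank_span_eq_card hli
    rw [← hW] at this
    rw [hfr] at this
    simp at this
  obtain ⟨c, hsum, j₀, hcj₀⟩ := Fintype.not_linearIndependent_iff.mp hnli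
  -- A j₀ lies in the span of other rows
  have hrow : A j₀ ∈ Submodule.span ℝ (A '' {j | j ≠ j₀}) := by
    have : A j₀ = (-(c j₀)⁻¹) • ∑ j ∈ Finset.univ.erase j₀, c j • A j := by
      have h1 : ∑ j ∈ Finset.univ.erase j₀, c j • A j = - (c j₀ • A j₀) := by
        have h2 := Finset.add_sum_erase Finset.univ (fun j => c j • A j) (Finset.mem_univ j₀)
        rw [hsum] at h2
        exact eq_neg_of_add_eq_zero_right h2
      rw [h1, smul_neg, smul_smul, neg_mul, inv_mul_cancel₀ hcj₀, neg_smul, one_smul, neg_neg]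
    rw [this]
    refine Submodule.smul_mem _ _ (Submodule.sum_mem _ fun j hj => ?_)
    refine Submodule.smul_mem _ _ (Submodule.subset_span ?_)
    exact ⟨j, Finset.ne_of_mem_erase hj, rfl⟩
  -- W is not everything: pick i₀ with e_{i₀} ∉ W
  have hWne : W ≠ ⊤ := by
    intro htop
    rw [htop, finrank_top] at hfr
    simp at hfr
  have hex : ∃ i₀ : Fin (N+1), (Pi.single i₀ 1 : Fin (N+1) → ℝ) ∉ W := by
    by_contra hall
    push_neg at hall
    apply hWne
    rw [eq_top_iff]
    intro x _
    have : x = ∑ i, x i • (Pi.single i 1 : Fin (N+1) → ℝ) := by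
      ext k; simp [Pi.single_apply, Finset.sum_apply]
    rw [this]
    exact Submodule.sum_mem _ fun i _ => Submodule.smul_mem _ _ (hall i)
  obtain ⟨i₀, hi₀⟩ := hex
  set M := A.updateRow j₀ (Pi.single i₀ 1) with hM
  -- rows of M span everything
  have hspan : Submodule.span ℝ (Set.range M) = ⊤ := by
    have hle : W ⊔ Submodule.span ℝ {(Pi.single i₀ 1 : Fin (N+1) → ℝ)}
        ≤ Submodule.span ℝ (Set.range M) := by
      refine sup_le ?_ ?_
      · rw [hW, Submodule.span_le]
        rintro _ ⟨j, rfl⟩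
        by_cases hj : j = j₀
        · rw [hj]
          have hsub : A '' {k | k ≠ j₀} ⊆ Set.range M := by
            rintro _ ⟨k, hk, rfl⟩
            exact ⟨k, by rw [hM, Matrix.updateRow_ne hk]⟩
          exact Submodule.span_mono hsub hrow
        · exact Submodule.subset_span ⟨j, by rw [hM, Matrix.updateRow_ne hj]⟩
      · rw [Submodule.span_le]
        rintro _ rfl
        exact Submodule.subset_span ⟨j₀, by rw [hM, Matrix.updateRow_self]⟩
    have hlt : W < W ⊔ Submodule.span ℝ {(Pi.single i₀ 1 : Fin (N+1) → ℝ)} := by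
      refine lt_of_le_of_ne le_sup_left ?_
      intro heq
      apply hi₀
      have hmem : (Pi.single i₀ 1 : Fin (N+1) → ℝ) ∈ W ⊔ Submodule.span ℝ {(Pi.single i₀ 1 : Fin (N+1) → ℝ)} :=
        Submodule.mem_sup_right (Submodule.mem_span_singleton_self _)
      rwa [← heq] at hmem
    have hfr2 : N < Module.finrank ℝ (W ⊔ Submodule.span ℝ {(Pi.single i₀ 1 : Fin (N+1) → ℝ)} : Submodule ℝ _) := by
      have := Submodule.finrank_lt_finrank_of_lt hlt
      omega
    have hle2 : Module.finrank ℝ (W ⊔ Submodule.span ℝ {(Pi.single i₀ 1 : Fin (N+1) → ℝ)} : Submodule ℝ _) ≤ N + 1 := by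
      have := Submodule.finrank_le (W ⊔ Submodule.span ℝ {(Pi.single i₀ 1 : Fin (N+1) → ℝ)} : Submodule ℝ (Fin (N+1) → ℝ))
      simpa using this
    have : Module.finrank ℝ (W ⊔ Submodule.span ℝ {(Pi.single i₀ 1 : Fin (N+1) → ℝ)} : Submodule ℝ _) = N + 1 := by omega
    rw [eq_top_iff]
    calc (⊤ : Submodule ℝ (Fin (N+1) → ℝ)) = W ⊔ Submodule.span ℝ {(Pi.single i₀ 1 : Fin (N+1) → ℝ)} := by
          refine (Submodule.eq_top_of_finrank_eq ?_).symm
          rw [this]; simp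
      _ ≤ _ := hle
  have hdet := det_ne_zero_of_rows_span M hspan
  intro hadj
  apply hdet
  have := congrFun (congrFun hadj i₀) j₀
  rw [Matrix.adjugate_apply] at this
  simpa [← hM] using this


theorem margulis_invariant_squared (n : ℕ)
    (Q g : Matrix (Fin (2 * n + 1)) (Fin (2 * n + 1)) ℝ)
    (v : Fin (2 * n + 1) → ℝ)
    (hQsymm : Qᵀ = Q) (hQsq : Q * Q = 1)
    (hg : gᵀ * Q * g = Q) (hdet : g.det = 1)
    (heig : ∀ x : Fin (2 * n + 1) → ℝ, g.mulVec x = x ↔ ∃ c : ℝ, x = c • v)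
    (hvnorm : v ⬝ᵥ Q.mulVec v = 1)
    (hrank : (1 - g).rank = 2 * n) :
    ∀ u : Fin (2 * n + 1) → ℝ,
      ((Matrix.adjugate (1 - g)).mulVec u ⬝ᵥ Q.mulVec u) /
          Matrix.trace (Matrix.adjugate (1 - g)) =
        (u ⬝ᵥ Q.mulVec v) ^ 2 := by
  classical
  intro u
  set A : Matrix (Fin (2 * n + 1)) (Fin (2 * n + 1)) ℝ := 1 - g with hA
  have hgv : g.mulVec v = v := (heig v).2 ⟨1, (one_smul ℝ v).symm⟩
  have hker : ∀ x, A.mulVec x = 0 ↔ g.mulVec x = x := by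
    intro x
    rw [hA, sub_mulVec, one_mulVec, sub_eq_zero, eq_comm]
  have hdetA : A.det = 0 := by
    by_contra hne
    have hu : IsUnit A := (Matrix.isUnit_iff_isUnit_det A).2 (isUnit_iff_ne_zero.2 hne)
    have h1 := Matrix.rank_of_isUnit A hu
    rw [hrank] at h1
    simp only [Fintype.card_fin] at h1
    omega
  have hAadj : A * adjugate A = 0 := by rw [Matrix.mul_adjugate, hdetA, zero_smul]
  have hadjA : adjugate A * A = 0 := by rw [Matrix.adjugate_mul, hdetA, zero_smul]
  have hcol : ∀ j, ∃ cj : ℝ, (fun i => adjugate A i j) = cj • v := by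
    intro j
    apply (heig _).1
    apply (hker _).1
    ext i
    have h0 : (A * adjugate A) i j = 0 := by rw [hAadj]; rfl
    rw [Matrix.mul_apply] at h0
    simpa [Matrix.mulVec, dotProduct] using h0
  choose c hc using hcol
  have hadje : ∀ i j, adjugate A i j = c j * v i := by
    intro i j
    have h1 := congrFun (hc j) i
    simpa [mul_comm] using h1
  have hvne : ∃ i, v i ≠ 0 := by
    by_contra h
    push_neg at h
    have hv0 : v = 0 := funext h
    rw [hv0] at hvnorm
    simp at hvnorm
  obtain ⟨i₁, hvi₁⟩ := hvne
  have hcA : Matrix.vecMul c A = 0 := by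
    ext j
    have h0 : (adjugate A * A) i₁ j = 0 := by rw [hadjA]; rfl
    rw [Matrix.mul_apply] at h0
    have h1 : ∑ k, (c k * v i₁) * A k j = 0 := by
      rw [← h0]
      exact Finset.sum_congr rfl fun k _ => by rw [hadje]
    have h2 : v i₁ * ∑ k, c k * A k j = 0 := by
      rw [Finset.mul_sum]
      rw [← h1]
      exact Finset.sum_congr rfl fun k _ => by ring
    have h3 : ∑ k, c k * A k j = 0 := by
      rcases mul_eq_zero.mp h2 with h | h
      · exact absurd h hvi₁
      · exact h
    simpa [Matrix.vecMul, dotProduct] using h3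
  have hcg : Matrix.vecMul c g = c := by
    have h1 : Matrix.vecMul c A = Matrix.vecMul c 1 - Matrix.vecMul c g := by
      rw [hA, Matrix.vecMul_sub]
    rw [hcA, Matrix.vecMul_one] at h1
    exact (sub_eq_zero.mp h1.symm).symm
  have hQQ : ∀ x, Q.mulVec (Q.mulVec x) = x := by
    intro x
    rw [Matrix.mulVec_mulVec, hQsq, one_mulVec]
  -- g * Q * gᵀ = Q
  have hQgQ : (Q * gᵀ * Q) * g = 1 := by
    calc (Q * gᵀ * Q) * g = Q * (gᵀ * Q * g) := by noncomm_ring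
    _ = Q * Q := by rw [hg]
    _ = 1 := hQsq
  have hgQgQ : g * (Q * gᵀ * Q) = 1 := mul_eq_one_comm.mp hQgQ
  have hgQg : g * Q * gᵀ = Q := by
    have h1 := congrArg (· * Q) hgQgQ
    simp only [one_mul] at h1
    calc g * Q * gᵀ = g * (Q * gᵀ * Q) * Q := by
          rw [show g * (Q * gᵀ * Q) * Q = g * Q * gᵀ * (Q * Q) by noncomm_ring, hQsq, mul_one]
    _ = Q := by rw [hgQgQ, one_mul]
  -- gᵀ.mulVec c = c
  have hgtc : gᵀ.mulVec c = c := by rw [Matrix.mulVec_transpose, hcg]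
  have hgQc : g.mulVec (Q.mulVec c) = Q.mulVec c := by
    conv_lhs => rw [← hgtc]
    rw [Matrix.mulVec_mulVec, Matrix.mulVec_mulVec, hgQg]
  obtain ⟨t, ht⟩ := (heig _).1 hgQc
  have hcQv : c = t • Q.mulVec v := by
    have h1 := congrArg Q.mulVec ht
    rw [hQQ, Matrix.mulVec_smul] at h1
    exact h1
  -- t ≠ 0
  have hadjne : adjugate A ≠ 0 := adjugate_ne_zero_of_rank A hrank
  have htne : t ≠ 0 := by
    intro ht0
    apply hadjne
    ext i j
    rw [hadje, hcQv, ht0, zero_smul]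
    simp
  -- trace
  have hQv : ∀ i, c i = t * Q.mulVec v i := fun i => by rw [hcQv]; simp
  have htr : Matrix.trace (adjugate A) = t := by
    rw [Matrix.trace]
    have h1 : ∀ i : Fin (2 * n + 1), (adjugate A).diag i = t * (Q.mulVec v i * v i) := by
      intro i
      rw [Matrix.diag_apply, hadje, hQv]
      ring
    rw [Finset.sum_congr rfl fun i _ => h1 i, ← Finset.mul_sum]
    have h2 : ∑ i, Q.mulVec v i * v i = v ⬝ᵥ Q.mulVec v := by
      rw [dotProduct]
      exact Finset.sum_congr rfl fun i _ => mul_comm _ _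
    rw [h2, hvnorm, mul_one]
  -- numerator
  have hsymm : v ⬝ᵥ Q.mulVec u = u ⬝ᵥ Q.mulVec v := by
    rw [Matrix.dotProduct_mulVec, ← Matrix.mulVec_transpose, hQsymm, dotProduct_comm]
  have hnum : (adjugate A).mulVec u ⬝ᵥ Q.mulVec u = t * (u ⬝ᵥ Q.mulVec v) ^ 2 := by
    have h1 : (adjugate A).mulVec u = (t * (u ⬝ᵥ Q.mulVec v)) • v := by
      ext i
      rw [Matrix.mulVec, dotProduct]
      have h2 : ∀ j : Fin (2 * n + 1), adjugate A i j * u j = t * v i * (u j * Q.mulVec v j) := by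
        intro j
        rw [hadje, hQv]
        ring
      rw [Finset.sum_congr rfl fun j _ => h2 j, ← Finset.mul_sum]
      simp only [Pi.smul_apply, smul_eq_mul]
      rw [show (u ⬝ᵥ Q.mulVec v) = ∑ j, u j * Q.mulVec v j from rfl]
      ring
    rw [h1, smul_dotProduct, smul_eq_mul, hsymm]
    ring
  rw [hnum, htr]
  field_simp
end

section
/- Let A be an invertible n×n real matrix with positive determinant, and form the (2n+1)×(2n+1) block matrix h = [[(A + (Aᵀ)⁻¹)/2, 0, (A − (Aᵀ)⁻¹)/2], [0, 1, 0], [(A − (Aᵀ)⁻¹)/2, 0, (A + (Aᵀ)⁻¹)/2]] (blocks of sizes n, 1, n). Then h preserves the quadratic form with matrix Q = diag(I_n, −I_{n+1}), i.e., hᵀ Q h = Q, and h fixes the vector v₀ = (0,…,0,1,0,…,0)ᵀ (1 in the (n+1)-st coordinate). -/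
open Matrix

/-- Index type for `ℝ^{2n+1}` split as `n + 1 + n`. -/
abbrev BlockIdx (n : ℕ) := Fin n ⊕ (Unit ⊕ Fin n)

/-- The block matrix `[[C,0,D],[0,1,0],[D,0,C]]` with `C = (A + (Aᵀ)⁻¹)/2`,
`D = (A − (Aᵀ)⁻¹)/2`. -/
noncomputable def blockH (n : ℕ) (A : Matrix (Fin n) (Fin n) ℝ) :
    Matrix (BlockIdx n) (BlockIdx n) ℝ :=
  let C : Matrix (Fin n) (Fin n) ℝ := (2 : ℝ)⁻¹ • (A + (Aᵀ)⁻¹)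
  let D : Matrix (Fin n) (Fin n) ℝ := (2 : ℝ)⁻¹ • (A - (Aᵀ)⁻¹)
  fun i j =>
    match i, j with
    | Sum.inl i, Sum.inl j => C i j
    | Sum.inl i, Sum.inr (Sum.inr j) => D i j
    | Sum.inr (Sum.inr i), Sum.inl j => D i j
    | Sum.inr (Sum.inr i), Sum.inr (Sum.inr j) => C i j
    | Sum.inr (Sum.inl _), Sum.inr (Sum.inl _) => 1
    | _, _ => 0

/-- The matrix `Q = diag(I_n, −I_{n+1})`. -/
def blockQ (n : ℕ) : Matrix (BlockIdx n) (BlockIdx n) ℝ :=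
  Matrix.diagonal (Sum.elim (fun _ => (1 : ℝ)) (fun _ => (-1 : ℝ)))

/-- The vector `v₀` with `1` in the middle coordinate. -/
def midVec (n : ℕ) : BlockIdx n → ℝ :=
  Sum.elim (fun _ => 0) (Sum.elim (fun _ => 1) (fun _ => 0))

theorem blockH_preserves_Q_and_fixes_v0 (n : ℕ) (A : Matrix (Fin n) (Fin n) ℝ)
    (hA : IsUnit A.det) (hpos : 0 < A.det) :
    (blockH n A)ᵀ * blockQ n * blockH n A = blockQ n ∧
      (blockH n A).mulVec (midVec n) = midVec n := by
  set C : Matrix (Fin n) (Fin n) ℝ := (2 : ℝ)⁻¹ • (A + (Aᵀ)⁻¹) with hC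
  set D : Matrix (Fin n) (Fin n) ℝ := (2 : ℝ)⁻¹ • (A - (Aᵀ)⁻¹) with hD
  have hdet : IsUnit (Aᵀ).det := by rwa [det_transpose]
  have e1 : Aᵀ * (Aᵀ)⁻¹ = 1 := mul_nonsing_inv _ hdet
  have e2 : A⁻¹ * A = 1 := nonsing_inv_mul _ hA
  have hCt : Cᵀ = (2 : ℝ)⁻¹ • (Aᵀ + A⁻¹) := by
    rw [hC, transpose_smul, transpose_add, transpose_nonsing_inv, transpose_transpose]
  have hDt : Dᵀ = (2 : ℝ)⁻¹ • (Aᵀ - A⁻¹) := by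
    rw [hD, transpose_smul, transpose_sub, transpose_nonsing_inv, transpose_transpose]
  have key1 : Cᵀ * C - Dᵀ * D = 1 := by
    rw [hCt, hDt, hC, hD, smul_mul_smul_comm, smul_mul_smul_comm, ← smul_sub]
    have h : (Aᵀ + A⁻¹) * (A + (Aᵀ)⁻¹) - (Aᵀ - A⁻¹) * (A - (Aᵀ)⁻¹)
        = 2 • (Aᵀ * (Aᵀ)⁻¹) + 2 • (A⁻¹ * A) := by noncomm_ring
    rw [h, e1, e2]
    module
  have key2 : Cᵀ * D = Dᵀ * C := by
    rw [hCt, hDt, hC, hD, smul_mul_smul_comm, smul_mul_smul_comm]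
    congr 1
    have h : (Aᵀ + A⁻¹) * (A - (Aᵀ)⁻¹) - (Aᵀ - A⁻¹) * (A + (Aᵀ)⁻¹)
        = 2 • (A⁻¹ * A) - 2 • (Aᵀ * (Aᵀ)⁻¹) := by noncomm_ring
    exact sub_eq_zero.mp (by rw [h, e1, e2]; simp)
  have hH : blockH n A
      = fromBlocks C (fromCols 0 D) (fromRows 0 D) (fromBlocks 1 0 0 C) := by
    ext i j
    rcases i with i | i | i <;> rcases j with j | j | j <;>
      simp [blockH, hC, hD, fromBlocks, fromCols, one_apply] <;> ring
  have hQ : blockQ n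
      = (fromBlocks 1 0 0 (-1) : Matrix (BlockIdx n) (BlockIdx n) ℝ) := by
    ext i j
    rcases i with i | i <;> rcases j with j | j <;>
      simp [blockQ, diagonal, fromBlocks, one_apply] <;>
      aesop
  constructor
  · rw [hH, hQ, fromBlocks_transpose, transpose_fromCols, transpose_fromRows,
      fromBlocks_transpose, fromBlocks_multiply, fromBlocks_multiply]
    simp only [Matrix.mul_one, Matrix.mul_zero, Matrix.zero_mul, Matrix.mul_neg,
      Matrix.neg_mul, add_zero, zero_add, transpose_zero, transpose_one,
      Matrix.mul_fromCols, fromRows_mul, fromCols_mul_fromRows,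
      fromRows_mul_fromCols, fromCols_mul_fromBlocks, fromBlocks_mul_fromRows,
      Matrix.one_mul, key2, fromBlocks_multiply]
    rw [show Cᵀ * C + -(Dᵀ * D) = 1 by rw [← sub_eq_add_neg]; exact key1]
    have hDD : Dᵀ * D = Cᵀ * C - 1 := by rw [← key1]; abel
    rw [hDD]
    ext i j
    rcases i with i | i | i <;> rcases j with j | j | j <;>
      simp [fromBlocks, fromCols, one_apply] <;> ring
  · ext i
    rcases i with i | i | i <;>
      simp [blockH, midVec, mulVec, dotProduct, Fintype.sum_sum_type]
end
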